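/- arXiv:2410.24145 — 3 statements merged into one kernel-verified Lean document; each statement's English description precedes it below -/
import Mathlib

section
/- Let (R_1, …, R_{n+1}) be an exchangeable random vector of real-valued random variables, and for k ∈ {1, …, n+1} let R_{(k)} denote the k-th order statistic of (R_1, …, R_{n+1}). Then for every k ∈ {1, …, n+1}, P(R_{n+1} ≤ R_{(k)}) ≥ k/(n+1). -/
/-!
Let `Aᵢ` be the event `Rᵢ ≤ R₍ₖ₎`. At every outcome at least `k + 1` of the events `Aᵢ` occur,
namely those of the indices realising the `k + 1` smallest values, so `∑ᵢ P(Aᵢ) ≥ k + 1`.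
The order statistic is invariant under permuting coordinates, so exchangeability (applied to the
transposition of `i` and `n`) gives `P(Aᵢ) = P(Aₙ)` for every `i`, hence `(n + 1) P(Aₙ) ≥ k + 1`.
-/

open MeasureTheory

/-- The `k`-th order statistic (0-indexed) of the tuple `f : Fin m → ℝ`. -/
noncomputable def orderStat {m : ℕ} (f : Fin m → ℝ) (k : Fin m) : ℝ :=
  f (Tuple.sort f k)

/-- A random vector `R` is exchangeable if every permutation of its components
has the same joint distribution as the original. -/
def Exchangeable {Ω : Type*} [MeasurableSpace Ω] (P : Measure Ω) {m : ℕ}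
    (R : Ω → Fin m → ℝ) : Prop :=
  ∀ π : Equiv.Perm (Fin m), Measure.map (fun ω => R ω ∘ π) P = Measure.map R P

open Finset

lemma orderStat_comp_perm {m : ℕ} (f : Fin m → ℝ) (σ : Equiv.Perm (Fin m)) (k : Fin m) :
    orderStat (f ∘ σ) k = orderStat f k :=
  congrFun (Tuple.comp_perm_comp_sort_eq_comp_sort (f := f) (σ := σ)) k

lemma orderStat_le_iff_lt_card {m : ℕ} (f : Fin m → ℝ) (k : Fin m) (a : ℝ) :
    orderStat f k ≤ a ↔ (k : ℕ) < #{i | f i ≤ a} := by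
  have hcard : #{i | f (Tuple.sort f i) ≤ a} = #{i | f i ≤ a} :=
    card_equiv (Tuple.sort f) (by simp)
  have h := Tuple.lt_card_le_iff_apply_le_of_monotone (j := k) (a := a) (Tuple.monotone_sort f)
  simp only [Function.comp_apply, hcard] at h
  exact h.symm

lemma lt_card_le_orderStat {m : ℕ} (f : Fin m → ℝ) (k : Fin m) :
    (k : ℕ) < #{i | f i ≤ orderStat f k} :=
  (orderStat_le_iff_lt_card f k _).1 le_rfl

lemma measurable_orderStat {m : ℕ} (k : Fin m) :
    Measurable fun f : Fin m → ℝ => orderStat f k := by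
  refine measurable_of_Iic fun a => ?_
  have hcount : Measurable fun f : Fin m → ℝ => #{i | f i ≤ a} := by
    simp_rw [card_filter]
    exact Finset.measurable_sum _ fun i _ =>
      Measurable.ite (measurableSet_le (measurable_pi_apply i) measurable_const)
        measurable_const measurable_const
  simp_rw [Set.preimage, Set.mem_Iic, orderStat_le_iff_lt_card]
  exact measurableSet_lt measurable_const hcount

lemma Exchangeable.measure_comp_perm_mem {Ω : Type*} [MeasurableSpace Ω] {P : Measure Ω}
    {m : ℕ} {R : Ω → Fin m → ℝ} (hexch : Exchangeable P R) (hR : Measurable R)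
    (σ : Equiv.Perm (Fin m)) {S : Set (Fin m → ℝ)} (hS : MeasurableSet S) :
    P {ω | R ω ∘ σ ∈ S} = P {ω | R ω ∈ S} := by
  have hRσ : Measurable fun ω => R ω ∘ σ := by fun_prop
  change P ((fun ω => R ω ∘ σ) ⁻¹' S) = P (R ⁻¹' S)
  rw [← Measure.map_apply hRσ hS, hexch σ, Measure.map_apply hR hS]

open scoped Classical in
lemma mul_measure_univ_le_sum_measure {α ι : Type*} [MeasurableSpace α] (μ : Measure α)
    (s : Finset ι) {A : ι → Set α} (hA : ∀ i ∈ s, MeasurableSet (A i)) {c : ℕ}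
    (hc : ∀ x, c ≤ #{i ∈ s | x ∈ A i}) :
    c * μ Set.univ ≤ ∑ i ∈ s, μ (A i) := by
  calc c * μ Set.univ = ∫⁻ _, (c : ENNReal) ∂μ := (lintegral_const _).symm
    _ ≤ ∫⁻ x, ∑ i ∈ s, (A i).indicator 1 x ∂μ := lintegral_mono fun x => by
        have hcount : (#{i ∈ s | x ∈ A i} : ENNReal) = ∑ i ∈ s, (A i).indicator 1 x := by
          simp only [card_filter, Nat.cast_sum, Nat.cast_ite, Nat.cast_one, Nat.cast_zero,
            Set.indicator_apply, Pi.one_apply]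
        exact hcount ▸ Nat.cast_le.2 (hc x)
    _ = ∑ i ∈ s, μ (A i) := by
        rw [lintegral_finsetSum' s (f := fun i => (A i).indicator 1)
          fun i hi => measurable_one.aemeasurable.indicator (hA i hi)]
        exact sum_congr rfl fun i hi => lintegral_indicator_one (hA i hi)

/-- For an exchangeable random vector `(R 0, …, R n)` and any `k` (0-indexed; the
1-indexed rank is `k + 1`), `P(R n ≤ R⁽ᵏ⁾) ≥ (k + 1)/(n + 1)`. -/
theorem prob_last_le_orderStat_ge {Ω : Type*} [MeasurableSpace Ω]
    (P : Measure Ω) [IsProbabilityMeasure P] (n : ℕ) (R : Ω → Fin (n + 1) → ℝ)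
    (hR : Measurable R) (hexch : Exchangeable P R) (k : Fin (n + 1)) :
    (((k : ℕ) + 1 : ℕ) : ENNReal) / ((n + 1 : ℕ) : ENNReal) ≤
      P {ω | R ω (Fin.last n) ≤ orderStat (R ω) k} := by
  set A : Fin (n + 1) → Set Ω := fun i => {ω | R ω i ≤ orderStat (R ω) k}
  have hA_meas (i : Fin (n + 1)) : MeasurableSet (A i) :=
    measurableSet_le ((measurable_pi_apply i).comp hR) ((measurable_orderStat k).comp hR)
  have hA_eq (i : Fin (n + 1)) : P (A i) = P (A (Fin.last n)) := by
    simpa [orderStat_comp_perm] using hexch.measure_comp_perm_mem hR (Equiv.swap i (Fin.last n))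
      (measurableSet_le (measurable_pi_apply (Fin.last n)) (measurable_orderStat k))
  have hcount : (((k : ℕ) + 1 : ℕ) : ENNReal) * P Set.univ ≤ ∑ i, P (A i) :=
    mul_measure_univ_le_sum_measure P univ (fun i _ => hA_meas i) fun ω =>
      (lt_card_le_orderStat (R ω) k).trans_eq (by congr)
  rw [measure_univ, mul_one, sum_congr rfl fun i _ => hA_eq i, sum_const, card_univ,
    Fintype.card_fin, nsmul_eq_mul, mul_comm] at hcount
  exact ENNReal.div_le_of_le_mul hcount
end

section
/- Let (R_1, …, R_n, R_{n+1}) be an exchangeable random vector of real-valued random variables. Let 0 < α < 1 be such that ⌈(1-α)(n+1)⌉ ≤ n, and let r̂ denote the ⌈(1-α)(n+1)⌉-th order statistic of the first n components R_1, …, R_n. Then P(R_{n+1} ≤ r̂) ≥ 1 - α. -/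
/-!
Let `rank f j` be the number of components of `f` strictly below `f j`. For any tuple of length
`n + 1` the `k + 1` smallest components (in sorted order) all have rank at most `k`, so averaging
over the components gives `∑ j, P(rank R j ≤ k) ≥ k + 1`. By exchangeability all these
probabilities are equal, hence `P(rank R n ≤ k) ≥ (k + 1) / (n + 1) ≥ 1 - α`. Finally, if fewer
than `k + 1` of the first `n` components lie strictly below `R n`, then `R n` is at most their
`k`-th order statistic.
-/

open MeasureTheory

open Finset
open scoped ENNReal

def rank {α : Type*} [LinearOrder α] {m : ℕ} (f : Fin m → α) (j : Fin m) : ℕ :=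
  #{i | f i < f j}

section Rank

variable {α : Type*} [LinearOrder α] {m : ℕ}

lemma rank_comp_perm (f : Fin m → α) (π : Equiv.Perm (Fin m)) (j : Fin m) :
    rank (f ∘ π) j = rank f (π j) :=
  card_bij' (fun i _ => π i) (fun i _ => π.symm i) (by simp) (by simp) (by simp) (by simp)

lemma rank_sort_le (f : Fin m → α) (p : Fin m) : rank f (Tuple.sort f p) ≤ p := by
  calc rank f (Tuple.sort f p)
      ≤ #(Iio p) := by
        refine card_le_card_of_injOn (Tuple.sort f).symm (fun i hi => ?_)
          (Tuple.sort f).symm.injective.injOn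
        simp only [coe_filter, mem_univ, true_and, Set.mem_ofPred_eq] at hi
        simp only [coe_Iio, Set.mem_Iio]
        by_contra! hle
        have := Tuple.monotone_sort f hle
        simp only [Function.comp_apply, Equiv.apply_symm_apply] at this
        exact this.not_gt hi
    _ = p := Fin.card_Iio p

lemma le_card_rank_le (f : Fin m → α) {K : ℕ} (hK : K < m) : K + 1 ≤ #{j | rank f j ≤ K} := by
  calc K + 1 = #(Iic (⟨K, hK⟩ : Fin m)) := (Fin.card_Iic (⟨K, hK⟩ : Fin m)).symm
    _ ≤ #{j | rank f j ≤ K} :=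
      card_le_card_of_injOn (Tuple.sort f)
        (fun p hp => by simpa using (rank_sort_le f p).trans (Fin.le_def.mp (mem_Iic.mp hp)))
        (Tuple.sort f).injective.injOn

lemma rank_last {n : ℕ} (f : Fin (n + 1) → α) :
    rank f (Fin.last n) = #{i : Fin n | f i.castSucc < f (Fin.last n)} := by
  simp only [rank, card_filter, Fin.sum_univ_castSucc, lt_self_iff_false, if_false, add_zero]

end Rank

lemma le_orderStat {m : ℕ} (f : Fin m → ℝ) {x : ℝ} (p : Fin m) (h : #{i | f i < x} ≤ p) :
    x ≤ orderStat f p := by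
  by_contra! hlt
  have hcard : #(Iic p) ≤ #{i | f i < x} := by
    refine card_le_card_of_injOn (Tuple.sort f) (fun q hq => ?_) (Tuple.sort f).injective.injOn
    simp only [coe_Iic, Set.mem_Iic] at hq
    simpa using (Tuple.monotone_sort f hq).trans_lt hlt
  rw [Fin.card_Iic] at hcard
  omega

lemma le_orderStat_init_of_rank_last_le {n : ℕ} (f : Fin (n + 1) → ℝ) {k : Fin n}
    (h : rank f (Fin.last n) ≤ k) :
    f (Fin.last n) ≤ orderStat (fun i : Fin n => f i.castSucc) k :=
  le_orderStat _ k (rank_last f ▸ h)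

lemma measurable_rank {m : ℕ} (j : Fin m) : Measurable fun f : Fin m → ℝ => rank f j := by
  simp only [rank, card_filter]
  exact Finset.measurable_sum _ fun i _ => Measurable.ite
    (measurableSet_lt (measurable_pi_apply i) (measurable_pi_apply j))
    measurable_const measurable_const

lemma natCast_mul_measure_univ_le_sum {Ω ι : Type*} [MeasurableSpace Ω] [Fintype ι]
    (μ : Measure Ω) {A : ι → Set Ω} [∀ j, DecidablePred (· ∈ A j)]
    (hA : ∀ j, MeasurableSet (A j)) {c : ℕ} (hc : ∀ ω, c ≤ #{j | ω ∈ A j}) :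
    c * μ Set.univ ≤ ∑ j, μ (A j) := by
  calc c * μ Set.univ = ∫⁻ _, (c : ℝ≥0∞) ∂μ := by simp
    _ ≤ ∫⁻ ω, ∑ j, (A j).indicator 1 ω ∂μ := lintegral_mono fun ω => by
        have hsum : ∑ j, (A j).indicator 1 ω = (#{j | ω ∈ A j} : ℝ≥0∞) := by
          rw [card_eq_sum_ones, Nat.cast_sum, sum_filter]
          simp [Set.indicator_apply]
        exact hsum ▸ Nat.cast_le.mpr (hc ω)
    _ = ∑ j, μ (A j) := by
        rw [lintegral_finsetSum _ fun j _ => measurable_one.indicator (hA j)]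
        simp [lintegral_indicator_one (hA _)]

namespace Exchangeable

variable {Ω : Type*} [MeasurableSpace Ω] {P : Measure Ω} {m : ℕ} {R : Ω → Fin m → ℝ}

lemma measure_comp_perm_mem_s4 (hexch : Exchangeable P R) (hR : Measurable R)
    (π : Equiv.Perm (Fin m)) {s : Set (Fin m → ℝ)} (hs : MeasurableSet s) :
    P {ω | R ω ∘ π ∈ s} = P (R ⁻¹' s) := by
  have hRπ : Measurable fun ω => R ω ∘ π :=
    measurable_pi_lambda _ fun i => (measurable_pi_apply (π i)).comp hR
  calc P {ω | R ω ∘ π ∈ s} = P.map (fun ω => R ω ∘ π) s := (Measure.map_apply hRπ hs).symm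
    _ = P (R ⁻¹' s) := by rw [hexch π, Measure.map_apply hR hs]

lemma measure_rank_le_eq (hexch : Exchangeable P R) (hR : Measurable R) (i j : Fin m) (K : ℕ) :
    P {ω | rank (R ω) i ≤ K} = P {ω | rank (R ω) j ≤ K} := by
  have := hexch.measure_comp_perm_mem_s4 hR (Equiv.swap i j) (s := {f | rank f i ≤ K})
    (measurable_rank i measurableSet_Iic)
  simpa [rank_comp_perm, eq_comm] using this

lemma div_le_measure_rank_le [IsProbabilityMeasure P] (hexch : Exchangeable P R)
    (hR : Measurable R) (j : Fin m) {K : ℕ} (hK : K < m) :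
    ((K + 1 : ℕ) : ℝ≥0∞) / m ≤ P {ω | rank (R ω) j ≤ K} := by
  refine ENNReal.div_le_of_le_mul' ?_
  calc ((K + 1 : ℕ) : ℝ≥0∞) = (K + 1 : ℕ) * P Set.univ := by simp
    _ ≤ ∑ i, P {ω | rank (R ω) i ≤ K} :=
      natCast_mul_measure_univ_le_sum P (A := fun i => {ω | rank (R ω) i ≤ K})
        (fun i => hR (measurable_rank i measurableSet_Iic)) fun ω => le_card_rank_le (R ω) hK
    _ = ∑ _i : Fin m, P {ω | rank (R ω) j ≤ K} :=
      sum_congr rfl fun i _ => hexch.measure_rank_le_eq hR i j K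
    _ = m * P {ω | rank (R ω) j ≤ K} := by simp

end Exchangeable

theorem split_conformal_lower_bound_general {Ω : Type*} [MeasurableSpace Ω]
    (P : Measure Ω) [IsProbabilityMeasure P] (n : ℕ) (R : Ω → Fin (n + 1) → ℝ)
    (hR : Measurable R) (hexch : Exchangeable P R)
    (α : ℝ)
    (k : Fin n) (hk : ((k : ℕ) : ℤ) + 1 = ⌈(1 - α) * ((n : ℝ) + 1)⌉) :
    ENNReal.ofReal (1 - α) ≤
      P {ω | R ω (Fin.last n) ≤ orderStat (fun i : Fin n => R ω i.castSucc) k} := by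
  have hα : ENNReal.ofReal (1 - α) ≤ ((k + 1 : ℕ) : ℝ≥0∞) / (n + 1 : ℕ) := by
    rw [← ENNReal.ofReal_natCast, ← ENNReal.ofReal_natCast,
      ← ENNReal.ofReal_div_of_pos (by positivity)]
    refine ENNReal.ofReal_le_ofReal ((le_div_iff₀ (by positivity)).mpr ?_)
    have hceil := Int.le_ceil ((1 - α) * ((n : ℝ) + 1))
    rw [← hk] at hceil
    push_cast at hceil ⊢
    linarith
  calc ENNReal.ofReal (1 - α)
      ≤ ((k + 1 : ℕ) : ℝ≥0∞) / (n + 1 : ℕ) := hα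
    _ ≤ P {ω | rank (R ω) (Fin.last n) ≤ k} :=
      hexch.div_le_measure_rank_le hR (Fin.last n) (by omega)
    _ ≤ _ := measure_mono fun ω hω => le_orderStat_init_of_rank_last_le (R ω) hω

/-- Split conformal lower bound: for an exchangeable random vector
`(R 0, …, R (n-1), R n)`, a miscoverage level `0 < α < 1` with
`⌈(1 - α)(n + 1)⌉ ≤ n` (witnessed by the index `k : Fin n` with
`k + 1 = ⌈(1 - α)(n + 1)⌉`, 0-indexed), and `r̂` the `⌈(1 - α)(n + 1)⌉`-th order
statistic of the first `n` components, we have `P(R n ≤ r̂) ≥ 1 - α`. -/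
theorem split_conformal_lower_bound {Ω : Type*} [MeasurableSpace Ω]
    (P : Measure Ω) [IsProbabilityMeasure P] (n : ℕ) (R : Ω → Fin (n + 1) → ℝ)
    (hR : Measurable R) (hexch : Exchangeable P R)
    (α : ℝ) (hα0 : 0 < α) (hα1 : α < 1)
    (k : Fin n) (hk : ((k : ℕ) : ℤ) + 1 = ⌈(1 - α) * ((n : ℝ) + 1)⌉) :
    ENNReal.ofReal (1 - α) ≤
      P {ω | R ω (Fin.last n) ≤ orderStat (fun i : Fin n => R ω i.castSucc) k} :=
  split_conformal_lower_bound_general P n R hR hexch α k hk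
end

section
/- Let ((X_1, Y_1), …, (X_{n+1}, Y_{n+1})) be an exchangeable sequence of random pairs with X_i taking values in ℝ^d and Y_i taking values in [0, 2π). Let μ̂ : ℝ^d → [0, 2π) and σ̂ : ℝ^d → (0, π] be fixed measurable functions, and define the conformity scores R_i = (π - |π - |Y_i - μ̂(X_i)||)/σ̂(X_i) for i = 1, …, n+1. Let 0 < α < 1 be such that ⌈(1-α)(n+1)⌉ ≤ n, and let r̂ denote the ⌈(1-α)(n+1)⌉-th order statistic of R_1, …, R_n. For x ∈ ℝ^d define the prediction set C(x) = {y ∈ [-π, 3π] : μ̂(x) - r̂·σ̂(x) ≤ y ≤ μ̂(x) + r̂·σ̂(x)} if r̂·σ̂(x) < π, and C(x) = [0, 2π) otherwise. Then P(there exists ℓ ∈ ℤ such that Y_{n+1} + 2ℓπ ∈ C(X_{n+1})) ≥ 1 - α. -/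
/-!
Score each pair by `ρ (x, y) = angularDist y (μ̂ x) / σ̂ x`. Pointwise, at least `k + 1` of the
`n + 1` indices have fewer than `k + 1` scores strictly below their own (the indices of the
`k + 1` smallest scores), and by exchangeability each index has this property with the same
probability; hence the test index has it with probability at least `(k + 1)/(n + 1) ≥ 1 - α`.
On that event the test score is at most the `k`-th order statistic `r̂` of the calibration
scores, so `Y` is within angular distance `r̂ σ̂(X)` of `μ̂(X)`, and one of `Y`, `Y ± 2π` lies
in the reported arc.
-/

open MeasureTheory Real

/-- The circular conformal prediction set for a point prediction `μx`, variability
estimate `σx`, and calibrated conformity quantile `r`: if `r * σx < π` it is the arc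
`[μx - r σx, μx + r σx]` reported inside `[-π, 3π]`, otherwise the whole circle `[0, 2π)`. -/
noncomputable def predSet (μx σx r : ℝ) : Set ℝ :=
  if r * σx < π then
    Set.Icc (-π) (3 * π) ∩ Set.Icc (μx - r * σx) (μx + r * σx)
  else Set.Ico 0 (2 * π)

open Finset ENNReal

noncomputable def strictRank {ι : Type*} [Fintype ι] (s : ι → ℝ) (j : ι) : ℕ :=
  #{i | s i < s j}

lemma strictRank_comp_perm {ι : Type*} [Fintype ι] (s : ι → ℝ) (σ : Equiv.Perm ι) (j : ι) :
    strictRank (s ∘ σ) j = strictRank s (σ j) :=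
  card_equiv σ fun i => by simp

lemma strictRank_sort_le {m : ℕ} (s : Fin m → ℝ) (b : Fin m) :
    strictRank s (Tuple.sort s b) ≤ b := by
  calc strictRank s (Tuple.sort s b) ≤ #(Iio b) := by
        refine card_le_card_of_injOn (Tuple.sort s).symm (fun i hi => ?_)
          (Tuple.sort s).symm.injective.injOn
        simp only [coe_filter, mem_univ, true_and, Set.mem_ofPred_eq] at hi
        simp only [coe_Iio, Set.mem_Iio]
        by_contra! hle
        have := Tuple.monotone_sort s hle
        simp only [Function.comp_apply, Equiv.apply_symm_apply] at this
        exact this.not_gt hi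
    _ = b := Fin.card_Iio b

lemma add_one_le_card_strictRank_le {m k : ℕ} (s : Fin m → ℝ) (hk : k < m) :
    k + 1 ≤ #{j | strictRank s j ≤ k} := by
  calc k + 1 = #((Iic (⟨k, hk⟩ : Fin m)).image (Tuple.sort s)) := by
        rw [card_image_of_injective _ (Equiv.injective _), Fin.card_Iic]
    _ ≤ #{j | strictRank s j ≤ k} := by
        refine card_le_card fun j hj => ?_
        obtain ⟨b, hb, rfl⟩ := mem_image.mp hj
        simpa using (strictRank_sort_le s b).trans (Fin.le_iff_val_le_val.mp (mem_Iic.mp hb))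

lemma le_orderStat_of_card_lt_le {m : ℕ} (s : Fin m → ℝ) (r : ℝ) (k : Fin m)
    (h : #{i | s i < r} ≤ k) : r ≤ orderStat s k := by
  by_contra! hlt
  have hsub : (Iic k).image (Tuple.sort s) ⊆ ({i | s i < r} : Finset (Fin m)) := by
    intro j hj
    obtain ⟨b, hb, rfl⟩ := mem_image.mp hj
    simpa using (Tuple.monotone_sort s (mem_Iic.mp hb)).trans_lt hlt
  have := card_le_card hsub
  rw [card_image_of_injective _ (Equiv.injective _), Fin.card_Iic] at this
  omega

lemma le_orderStat_castSucc_of_strictRank_last_le {n : ℕ} (s : Fin (n + 1) → ℝ) (k : Fin n)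
    (h : strictRank s (Fin.last n) ≤ k) : s (Fin.last n) ≤ orderStat (fun i => s i.castSucc) k :=
  le_orderStat_of_card_lt_le _ _ k <| (card_le_card_of_injOn Fin.castSucc
    (fun i hi => by simpa using hi) (Fin.castSucc_injective n).injOn).trans h

section Exchangeable

variable {Ω β ι : Type*} [MeasurableSpace Ω] [MeasurableSpace β] [Fintype ι]

def rankLE (ρ : β → ℝ) (k : ℕ) (j : ι) : Set (ι → β) :=
  {v | strictRank (ρ ∘ v) j ≤ k}

lemma measurableSet_rankLE {ρ : β → ℝ} (hρ : Measurable ρ) (k : ℕ) (j : ι) :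
    MeasurableSet (rankLE ρ k j) := by
  have : Measurable fun v : ι → β => strictRank (ρ ∘ v) j := by
    simp only [strictRank, card_filter]
    refine measurable_sum _ fun i _ => Measurable.ite ?_ measurable_const measurable_const
    exact measurableSet_lt (hρ.comp (measurable_pi_apply i)) (hρ.comp (measurable_pi_apply j))
  exact this measurableSet_Iic

lemma measure_preimage_rankLE_eq {P : Measure Ω} {T : Ω → ι → β} (hT : Measurable T)
    (hexch : ∀ σ : Equiv.Perm ι, P.map (fun ω => T ω ∘ σ) = P.map T)
    {ρ : β → ℝ} (hρ : Measurable ρ) (k : ℕ) (i j : ι) :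
    P (T ⁻¹' rankLE ρ k i) = P (T ⁻¹' rankLE ρ k j) := by
  classical
  set σ := Equiv.swap i j
  have hσT : Measurable fun ω => T ω ∘ σ :=
    measurable_pi_lambda _ fun l => (measurable_pi_apply (σ l)).comp hT
  have hpre : T ⁻¹' rankLE ρ k i = (fun ω => T ω ∘ σ) ⁻¹' rankLE ρ k j := by
    ext ω
    simp only [Set.mem_preimage, rankLE, Set.mem_ofPred_eq, ← Function.comp_assoc,
      strictRank_comp_perm, σ, Equiv.swap_apply_right]
  rw [hpre, ← Measure.map_apply hσT (measurableSet_rankLE hρ k j), hexch,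
    Measure.map_apply hT (measurableSet_rankLE hρ k j)]

lemma add_one_mul_measure_univ_le_mul_measure_rankLE {m : ℕ} {P : Measure Ω} {T : Ω → Fin m → β} (hT : Measurable T)
    (hexch : ∀ σ : Equiv.Perm (Fin m), P.map (fun ω => T ω ∘ σ) = P.map T)
    {ρ : β → ℝ} (hρ : Measurable ρ) {k : ℕ} (hk : k < m) (j : Fin m) :
    (k + 1 : ℝ≥0∞) * P Set.univ ≤ m * P (T ⁻¹' rankLE ρ k j) := by
  have hmeas : ∀ i, MeasurableSet (T ⁻¹' rankLE ρ k i) := fun i =>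
    hT (measurableSet_rankLE hρ k i)
  have hpointwise : ∀ ω, (k + 1 : ℝ≥0∞) ≤ ∑ i, (T ⁻¹' rankLE ρ k i).indicator 1 ω := by
    intro ω
    have hsum : ∑ i, (T ⁻¹' rankLE ρ k i).indicator 1 ω =
        (#{i | strictRank (ρ ∘ T ω) i ≤ k} : ℝ≥0∞) := by
      simp [Set.indicator_apply, rankLE, sum_boole]
    rw [hsum]
    exact_mod_cast add_one_le_card_strictRank_le (ρ ∘ T ω) hk
  calc (k + 1 : ℝ≥0∞) * P Set.univ = ∫⁻ _, (k + 1 : ℝ≥0∞) ∂P := (lintegral_const _).symm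
    _ ≤ ∫⁻ ω, ∑ i, (T ⁻¹' rankLE ρ k i).indicator 1 ω ∂P := lintegral_mono hpointwise
    _ = ∑ i, P (T ⁻¹' rankLE ρ k i) := by
        rw [lintegral_finsetSum _ fun i _ => measurable_one.indicator (hmeas i)]
        simp only [lintegral_indicator_one (hmeas _)]
    _ = m * P (T ⁻¹' rankLE ρ k j) := by
        simp [measure_preimage_rankLE_eq hT hexch hρ k _ j]

end Exchangeable

noncomputable def angularDist (θ φ : ℝ) : ℝ := π - abs (π - |θ - φ|)

lemma exists_int_add_mem_predSet {μ σ y r : ℝ} (hμ : μ ∈ Set.Ico 0 (2 * π))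
    (hy : y ∈ Set.Ico 0 (2 * π)) (h : angularDist y μ ≤ r * σ) :
    ∃ ℓ : ℤ, y + 2 * ℓ * π ∈ predSet μ σ r := by
  obtain ⟨hμ0, hμ2⟩ := hμ
  obtain ⟨hy0, hy2⟩ := hy
  unfold angularDist at h
  unfold predSet
  split_ifs with hc
  · simp only [Set.mem_inter_iff, Set.mem_Icc]
    rcases le_total |y - μ| π with hle | hle
    · rw [abs_of_nonneg (sub_nonneg.mpr hle)] at h
      obtain ⟨h1, h2⟩ := abs_le.mp (show |y - μ| ≤ r * σ by linarith)
      exact ⟨0, by push_cast; constructor <;> constructor <;> linarith⟩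
    · rw [abs_of_nonpos (sub_nonpos.mpr hle)] at h
      rcases le_total y μ with hyμ | hμy
      · rw [abs_of_nonpos (sub_nonpos.mpr hyμ)] at h hle
        exact ⟨1, by push_cast; constructor <;> constructor <;> linarith⟩
      · rw [abs_of_nonneg (sub_nonneg.mpr hμy)] at h hle
        exact ⟨-1, by push_cast; constructor <;> constructor <;> linarith⟩
  · exact ⟨0, by simpa using ⟨hy0, hy2⟩⟩

lemma ofReal_le_natCast_div_of_mul_le {t : ℝ} {a b : ℕ} (hb : b ≠ 0) (h : t * b ≤ a) :
    ENNReal.ofReal t ≤ a / b := by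
  have hb' : (0 : ℝ) < b := by positivity
  calc ENNReal.ofReal t ≤ ENNReal.ofReal (a / b) :=
        ENNReal.ofReal_le_ofReal ((le_div_iff₀ hb').mpr h)
    _ = a / b := by rw [ENNReal.ofReal_div_of_pos hb', ofReal_natCast, ofReal_natCast]

theorem circular_split_conformal_lower_general {Ω : Type*} [MeasurableSpace Ω]
    (P : Measure Ω) [IsProbabilityMeasure P] (n d : ℕ)
    (X : Ω → Fin (n + 1) → (Fin d → ℝ)) (Y : Ω → Fin (n + 1) → ℝ)
    (hX : Measurable X) (hY : Measurable Y)
    (hexch : ∀ π' : Equiv.Perm (Fin (n + 1)),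
      Measure.map (fun ω => fun i => (X ω (π' i), Y ω (π' i))) P =
        Measure.map (fun ω => fun i => (X ω i, Y ω i)) P)
    (hYrange : ∀ ω i, Y ω i ∈ Set.Ico 0 (2 * π))
    (μhat σhat : (Fin d → ℝ) → ℝ) (hμmeas : Measurable μhat) (hσmeas : Measurable σhat)
    (hμrange : ∀ x, μhat x ∈ Set.Ico 0 (2 * π))
    (hσrange : ∀ x, σhat x ∈ Set.Ioc 0 π)
    (R : Ω → Fin (n + 1) → ℝ)
    (hRdef : ∀ ω i, R ω i = (π - abs (π - |Y ω i - μhat (X ω i)|)) / σhat (X ω i))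
    (α : ℝ)
    (k : Fin n) (hk : ((k : ℕ) : ℤ) + 1 = ⌈(1 - α) * ((n : ℝ) + 1)⌉) :
    ENNReal.ofReal (1 - α) ≤
      P {ω | ∃ ℓ : ℤ, Y ω (Fin.last n) + 2 * ℓ * π ∈
        predSet (μhat (X ω (Fin.last n))) (σhat (X ω (Fin.last n)))
          (orderStat (fun i : Fin n => R ω i.castSucc) k)} := by
  set ρ : (Fin d → ℝ) × ℝ → ℝ := fun p => angularDist p.2 (μhat p.1) / σhat p.1
  have hρ : Measurable ρ := by unfold ρ angularDist; fun_prop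
  set T : Ω → Fin (n + 1) → (Fin d → ℝ) × ℝ := fun ω i => (X ω i, Y ω i)
  have hT : Measurable T := by fun_prop
  have hcount := add_one_mul_measure_univ_le_mul_measure_rankLE hT hexch hρ (Nat.lt_succ_of_lt k.2) (Fin.last n)
  have hcover : T ⁻¹' rankLE ρ k (Fin.last n) ⊆ {ω | ∃ ℓ : ℤ, Y ω (Fin.last n) + 2 * ℓ * π ∈
      predSet (μhat (X ω (Fin.last n))) (σhat (X ω (Fin.last n)))
        (orderStat (fun i : Fin n => R ω i.castSucc) k)} := by
    intro ω hω
    have hR : R ω = ρ ∘ T ω := funext fun i => hRdef ω i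
    have hle := le_orderStat_castSucc_of_strictRank_last_le (R ω) k (hR ▸ hω)
    rw [hRdef, div_le_iff₀ (hσrange _).1] at hle
    exact exists_int_add_mem_predSet (hμrange _) (hYrange ω _) hle
  have hquantile : (1 - α) * ((n + 1 : ℕ) : ℝ) ≤ ((k + 1 : ℕ) : ℝ) := by
    have := Int.le_ceil ((1 - α) * ((n : ℝ) + 1))
    rw [← hk] at this
    exact_mod_cast this
  calc ENNReal.ofReal (1 - α) ≤ ((k + 1 : ℕ) : ℝ≥0∞) / ((n + 1 : ℕ) : ℝ≥0∞) :=
        ofReal_le_natCast_div_of_mul_le n.succ_ne_zero hquantile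
    _ ≤ P (T ⁻¹' rankLE ρ k (Fin.last n)) :=
        ENNReal.div_le_of_le_mul' (by simpa using hcount)
    _ ≤ _ := measure_mono hcover

/-- Split conformal prediction for circular responses, lower coverage bound:
for exchangeable pairs `(X i, Y i)`, circular conformity scores
`R i = (π - |π - |Y i - μ̂(X i)||)/σ̂(X i)`, and `r̂` the `⌈(1-α)(n+1)⌉`-th order
statistic of the first `n` scores (witnessed by `k : Fin n`, 0-indexed), the
probability that some periodic translate of `Y (n+1)` lies in the prediction set
is at least `1 - α`. -/
theorem circular_split_conformal_lower {Ω : Type*} [MeasurableSpace Ω]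
    (P : Measure Ω) [IsProbabilityMeasure P] (n d : ℕ)
    (X : Ω → Fin (n + 1) → (Fin d → ℝ)) (Y : Ω → Fin (n + 1) → ℝ)
    (hX : Measurable X) (hY : Measurable Y)
    (hexch : ∀ π' : Equiv.Perm (Fin (n + 1)),
      Measure.map (fun ω => fun i => (X ω (π' i), Y ω (π' i))) P =
        Measure.map (fun ω => fun i => (X ω i, Y ω i)) P)
    (hYrange : ∀ ω i, Y ω i ∈ Set.Ico 0 (2 * π))
    (μhat σhat : (Fin d → ℝ) → ℝ) (hμmeas : Measurable μhat) (hσmeas : Measurable σhat)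
    (hμrange : ∀ x, μhat x ∈ Set.Ico 0 (2 * π))
    (hσrange : ∀ x, σhat x ∈ Set.Ioc 0 π)
    (R : Ω → Fin (n + 1) → ℝ)
    (hRdef : ∀ ω i, R ω i = (π - abs (π - |Y ω i - μhat (X ω i)|)) / σhat (X ω i))
    (α : ℝ) (hα0 : 0 < α) (hα1 : α < 1)
    (k : Fin n) (hk : ((k : ℕ) : ℤ) + 1 = ⌈(1 - α) * ((n : ℝ) + 1)⌉) :
    ENNReal.ofReal (1 - α) ≤
      P {ω | ∃ ℓ : ℤ, Y ω (Fin.last n) + 2 * ℓ * π ∈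
        predSet (μhat (X ω (Fin.last n))) (σhat (X ω (Fin.last n)))
          (orderStat (fun i : Fin n => R ω i.castSucc) k)} :=
  circular_split_conformal_lower_general P n d X Y hX hY hexch hYrange μhat σhat hμmeas hσmeas
    hμrange hσrange R hRdef α k hk
end
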